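/- The categories Preglid FR and Prefrag FR are complete and cocomplete quasi-abelian categories: each is additive with all limits and colimits (in particular kernels and cokernels), cokernels are stable under pullback (the pullback of a morphism that is a cokernel along any morphism is again a cokernel), and kernels are stable under pushout (the pushout of a morphism that is a kernel along any morphism is again a kernel). -/

import Mathlib

set_option linter.unusedSectionVars false
set_option maxHeartbeats 1000000
set_option synthInstance.maxHeartbeats 1000000
set_option maxHeartbeats 2000000

noncomputable section

open CategoryTheory CategoryTheory.Limits

universe u

namespace GliderPaper

/-- A `Γ`-filtration `FR` on a unital ring `R`: additive subgroups `F γ` with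
`1 ∈ F 1`, monotone in `γ`, and multiplicative. -/
structure RingFiltration (Γ : Type u) [Group Γ] [PartialOrder Γ] (R : Type u) [Ring R] where
  F : Γ → AddSubgroup R
  one_mem : (1 : R) ∈ F 1
  mono : ∀ {α β : Γ}, α ≤ β → F α ≤ F β
  mul_mem : ∀ {α β : Γ} {a b : R}, a ∈ F α → b ∈ F β → a * b ∈ F (α * β)

variable {Γ : Type u} [Group Γ] [PartialOrder Γ]
  [CovariantClass Γ Γ (· * ·) (· ≤ ·)] [CovariantClass Γ Γ (Function.swap (· * ·)) (· ≤ ·)]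
  {R : Type u} [Ring R]

/-- Objects of the extended filtered companion category `oFF_Λ R`:
the disjoint union `Λ ⊔ {∞}`. -/
inductive OFF (FR : RingFiltration Γ R) (Λ : Set Γ) : Type u
  | of (α : Λ)
  | infty

/-- Objects of the filtered companion category `FF_Λ R`: the set `Λ`. -/
inductive FF (FR : RingFiltration Γ R) (Λ : Set Γ) : Type u
  | of (α : Λ)

variable (FR : RingFiltration Γ R) (Λ : Set Γ)

namespace OFF

/-- `le X Y` holds iff the canonical morphism `1_{X,Y}` is defined, i.e. `X ≤ Y` in `Λ`,
or `Y = ∞`. -/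
def le : OFF FR Λ → OFF FR Λ → Prop
  | of α, of β => (α : Γ) ≤ (β : Γ)
  | _, infty => True
  | infty, of _ => False

open scoped Classical in
/-- The additive subgroup of `R` of morphisms `X ⟶ Y` in `oFF_Λ R`:
`Hom(α,β) = F_{βα⁻¹}R` for `α ≤ β` in `Λ`, `Hom(X,∞) = R`, and `0` otherwise. -/
noncomputable def homGrp : OFF FR Λ → OFF FR Λ → AddSubgroup R
  | of α, of β => if (α : Γ) ≤ (β : Γ) then FR.F ((β : Γ) * (α : Γ)⁻¹) else ⊥
  | _, infty => ⊤
  | infty, of _ => ⊥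

theorem le_refl' : ∀ X : OFF FR Λ, le FR Λ X X
  | of _ => _root_.le_refl _
  | infty => trivial

theorem one_mem_homGrp : ∀ {X Y : OFF FR Λ}, le FR Λ X Y → (1 : R) ∈ homGrp FR Λ X Y
  | of α, of β, h => by
      have h' : (α : Γ) ≤ (β : Γ) := h
      have h1 : (1 : Γ) ≤ (β : Γ) * (α : Γ)⁻¹ := by
        rw [← mul_inv_cancel (α : Γ)]
        exact mul_le_mul_left h' _
      simpa [homGrp, if_pos h'] using FR.mono h1 FR.one_mem
  | of _, infty, _ => trivial
  | infty, infty, _ => trivial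
  | infty, of _, h => h.elim

theorem mul_mem_homGrp : ∀ {X Y Z : OFF FR Λ} {f g : R},
    f ∈ homGrp FR Λ X Y → g ∈ homGrp FR Λ Y Z → g * f ∈ homGrp FR Λ X Z := by
  intro X Y Z f g hf hg
  cases X <;> cases Y <;> cases Z <;> simp only [homGrp] at hf hg ⊢ <;> try trivial
  case of.of.of a b c =>
    by_cases hab : (a : Γ) ≤ (b : Γ)
    · by_cases hbc : (b : Γ) ≤ (c : Γ)
      · rw [if_pos hab] at hf
        rw [if_pos hbc] at hg
        rw [if_pos (le_trans hab hbc)]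
        have := FR.mul_mem hg hf
        rwa [show (c : Γ) * (b : Γ)⁻¹ * ((b : Γ) * (a : Γ)⁻¹) = (c : Γ) * (a : Γ)⁻¹ by
          group] at this
      · rw [if_neg hbc] at hg
        rw [AddSubgroup.mem_bot] at hg
        subst hg
        simp only [zero_mul]
        exact AddSubgroup.zero_mem _
    · rw [if_neg hab] at hf
      rw [AddSubgroup.mem_bot] at hf
      subst hf
      simp only [mul_zero]
      exact AddSubgroup.zero_mem _
  case of.infty.of a c =>
    rw [AddSubgroup.mem_bot] at hg
    subst hg
    simp only [zero_mul]
    exact AddSubgroup.zero_mem _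
  case infty.of.of b c =>
    rw [AddSubgroup.mem_bot] at hf
    subst hf
    simp only [mul_zero]
    exact AddSubgroup.zero_mem _
  case infty.infty.of c =>
    rw [AddSubgroup.mem_bot] at hg
    subst hg
    simp only [zero_mul]
    exact AddSubgroup.zero_mem _

instance : Category (OFF FR Λ) where
  Hom X Y := homGrp FR Λ X Y
  id X := ⟨1, one_mem_homGrp FR Λ (le_refl' FR Λ X)⟩
  comp f g := ⟨g.1 * f.1, mul_mem_homGrp FR Λ f.2 g.2⟩
  id_comp f := Subtype.ext (mul_one f.1)
  comp_id f := Subtype.ext (one_mul f.1)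
  assoc f g h := Subtype.ext (mul_assoc h.1 g.1 f.1).symm

instance : Preadditive (OFF FR Λ) where
  homGroup X Y := inferInstanceAs (AddCommGroup (homGrp FR Λ X Y))
  add_comp _ _ _ f f' g := Subtype.ext (mul_add g.1 f.1 f'.1)
  comp_add _ _ _ f g g' := Subtype.ext (add_mul g.1 g'.1 f.1)

end OFF

namespace FF

/-- The inclusion of the objects of `FF_Λ R` into those of `oFF_Λ R`. -/
def toOFF : FF FR Λ → OFF FR Λ
  | of α => .of α

instance : Category (FF FR Λ) where
  Hom X Y := OFF.homGrp FR Λ (toOFF FR Λ X) (toOFF FR Λ Y)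
  id X := ⟨1, OFF.one_mem_homGrp FR Λ (OFF.le_refl' FR Λ _)⟩
  comp f g := ⟨g.1 * f.1, OFF.mul_mem_homGrp FR Λ f.2 g.2⟩
  id_comp f := Subtype.ext (mul_one f.1)
  comp_id f := Subtype.ext (one_mul f.1)
  assoc f g h := Subtype.ext (mul_assoc h.1 g.1 f.1).symm

instance : Preadditive (FF FR Λ) where
  homGroup X Y := inferInstanceAs (AddCommGroup (OFF.homGrp FR Λ (toOFF FR Λ X) (toOFF FR Λ Y)))
  add_comp _ _ _ f f' g := Subtype.ext (mul_add g.1 f.1 f'.1)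
  comp_add _ _ _ f g g' := Subtype.ext (add_mul g.1 g'.1 f.1)

end FF

/-- The inclusion functor `j : FF_Λ R ⥤ oFF_Λ R`. -/
def jF : FF FR Λ ⥤ OFF FR Λ where
  obj := FF.toOFF FR Λ
  map f := f
  map_id _ := rfl
  map_comp _ _ := rfl

instance : (jF FR Λ).Additive := ⟨rfl⟩

/-- `Mod C`: the category of additive functors from `C` to abelian groups. -/
abbrev Mod (C : Type u) [Category.{u} C] [Preadditive C] : Type (u + 1) :=
  C ⥤+ AddCommGrpCat.{u}

/-- The component at `X` of a morphism in `Mod C`. -/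
def mapp {C : Type u} [Category.{u} C] [Preadditive C] {M N : Mod C} (f : M ⟶ N) (X : C) :
    M.obj.obj X ⟶ N.obj.obj X :=
  f.hom.app X

/-- The canonical morphism `1_{X,Y}` in `oFF_Λ R`, given by `1_R`. -/
def unitHom (X Y : OFF FR Λ) (h : OFF.le FR Λ X Y) : X ⟶ Y :=
  ⟨1, OFF.one_mem_homGrp FR Λ h⟩

/-- The canonical morphism `1_{α,β}` in `FF_Λ R`, given by `1_R`. -/
def unitHomFF (α β : Λ) (h : (α : Γ) ≤ (β : Γ)) : (FF.of α : FF FR Λ) ⟶ FF.of β :=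
  unitHom FR Λ (.of α) (.of β) h

/-- A module `M` over `oFF_Λ R` is a preglider if all the maps `M(1_{X,Y})` are injective. -/
def IsPreglider (M : Mod (OFF FR Λ)) : Prop :=
  ∀ (X Y : OFF FR Λ) (h : OFF.le FR Λ X Y), Function.Injective (M.obj.map (unitHom FR Λ X Y h))

/-- A module `M` over `FF_Λ R` is a prefragment if all the maps `M(1_{α,β})` are injective. -/
def IsPrefragment (M : Mod (FF FR Λ)) : Prop :=
  ∀ (α β : Λ) (h : (α : Γ) ≤ (β : Γ)), Function.Injective (M.obj.map (unitHomFF FR Λ α β h))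

/-- The category of pregliders: the full subcategory of `Mod (oFF_Λ R)` of pregliders. -/
abbrev Preglid : Type (u + 1) :=
  ObjectProperty.FullSubcategory (fun M : Mod (OFF FR Λ) => IsPreglider FR Λ M)

instance : Preadditive (Preglid FR Λ) := Preadditive.inducedCategory _

/-- The category of prefragments: the full subcategory of `Mod (FF_Λ R)` of prefragments. -/
abbrev Prefrag : Type (u + 1) :=
  ObjectProperty.FullSubcategory (fun M : Mod (FF FR Λ) => IsPrefragment FR Λ M)

instance : Preadditive (Prefrag FR Λ) := Preadditive.inducedCategory _

/-- The inclusion `Preglid FR Λ ⥤ Mod (oFF_Λ R)`. -/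
def iotaF : Preglid FR Λ ⥤ Mod (OFF FR Λ) := ObjectProperty.ι _

/-- The inclusion `Prefrag FR Λ ⥤ Mod (FF_Λ R)`. -/
def etaF : Prefrag FR Λ ⥤ Mod (FF FR Λ) := ObjectProperty.ι _

/-- The component at `X` of a morphism of pregliders. -/
def pgapp {M N : Preglid FR Λ} (f : M ⟶ N) (X : OFF FR Λ) :
    M.obj.obj.obj X ⟶ N.obj.obj.obj X :=
  mapp f.hom X

/-- The component at `X` of a morphism of prefragments. -/
def pfapp {M N : Prefrag FR Λ} (f : M ⟶ N) (X : FF FR Λ) :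
    M.obj.obj.obj X ⟶ N.obj.obj.obj X :=
  mapp f.hom X

/-- The class `Σ` of morphisms of pregliders all of whose components at objects of `Λ`
are isomorphisms. -/
def SigmaClass : MorphismProperty (Preglid FR Λ) :=
  fun _ _ f => ∀ α : Λ, IsIso (pgapp FR Λ f (.of α))

/-- The category of glider representations: the localization of `Preglid FR Λ` at `Σ`. -/
abbrev Glid : Type (u + 1) := (SigmaClass FR Λ).Localization

/-- The localization functor `Q : Preglid FR Λ ⥤ Glid FR Λ`. -/
def QF : Preglid FR Λ ⥤ Glid FR Λ := (SigmaClass FR Λ).Q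

/-- The restriction functor `j^* : Mod (oFF_Λ R) ⥤ Mod (FF_Λ R)`. -/
def jStar : Mod (OFF FR Λ) ⥤ Mod (FF FR Λ) where
  obj M := ⟨jF FR Λ ⋙ M.obj, by haveI := M.property; exact (inferInstance : (jF FR Λ ⋙ M.obj).Additive)⟩
  map {M N} f := InducedCategory.homMk (Functor.whiskerLeft (jF FR Λ) f.hom)
  map_id _ := rfl
  map_comp _ _ := rfl

theorem isPrefragment_jStar (M : Mod (OFF FR Λ)) (hM : IsPreglider FR Λ M) :
    IsPrefragment FR Λ ((jStar FR Λ).obj M) :=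
  fun α β h => hM (.of α) (.of β) h

/-- The restriction functor `j^* : Preglid FR Λ ⥤ Prefrag FR Λ`. -/
def jRes : Preglid FR Λ ⥤ Prefrag FR Λ where
  obj M := ⟨(jStar FR Λ).obj M.obj, isPrefragment_jStar FR Λ M.obj M.property⟩
  map f := InducedCategory.homMk ((jStar FR Λ).map f.hom)
  map_id M := by ext1; exact (jStar FR Λ).map_id M.obj
  map_comp f g := by ext1; exact (jStar FR Λ).map_comp f.hom g.hom

theorem sigma_isInvertedBy : (SigmaClass FR Λ).IsInvertedBy (jRes FR Λ) := by
  intro M N f hf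
  haveI : (AdditiveFunctor.forget (FF FR Λ) AddCommGrpCat.{u}).Faithful :=
    ObjectProperty.faithful_ι _
  haveI : ∀ X : FF FR Λ, IsIso
      (((ObjectProperty.ι (fun M : Mod (FF FR Λ) => IsPrefragment FR Λ M) ⋙
        AdditiveFunctor.forget _ _).map ((jRes FR Λ).map f)).app X) := by
    rintro ⟨α⟩
    exact hf α
  haveI : IsIso ((ObjectProperty.ι (fun M : Mod (FF FR Λ) => IsPrefragment FR Λ M) ⋙
      AdditiveFunctor.forget _ _).map ((jRes FR Λ).map f)) :=
    NatIso.isIso_of_isIso_app _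
  exact isIso_of_reflects_iso ((jRes FR Λ).map f)
    (ObjectProperty.ι (fun M : Mod (FF FR Λ) => IsPrefragment FR Λ M) ⋙
      AdditiveFunctor.forget _ _)

/-- The canonical fully faithful functor `φ : Glid FR Λ ⥤ Prefrag FR Λ`,
the unique functor with `Q ⋙ φ = j^*`. -/
def phiF : Glid FR Λ ⥤ Prefrag FR Λ :=
  Localization.Construction.lift (jRes FR Λ) (sigma_isInvertedBy FR Λ)

theorem phiF_fac : QF FR Λ ⋙ phiF FR Λ = jRes FR Λ :=
  Localization.Construction.fac _ _


section ConflationDefs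

/-- `f` factors through a zero object. In an additive category this says `f = 0`;
we use it to express (co)kernels without assuming a preadditive structure. -/
def FactorsThroughZero {C : Type*} [Category C] {X Y : C} (f : X ⟶ Y) : Prop :=
  ∃ (N : C) (_ : IsZero N) (a : X ⟶ N) (b : N ⟶ Y), f = a ≫ b

/-- `g` is a cokernel of `f` (universal property). -/
def IsCokernelOf {C : Type*} [Category C] {X Y Z : C} (f : X ⟶ Y) (g : Y ⟶ Z) : Prop :=
  FactorsThroughZero (f ≫ g) ∧
  ∀ ⦃W : C⦄ (h : Y ⟶ W), FactorsThroughZero (f ≫ h) → ∃! k : Z ⟶ W, g ≫ k = h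

/-- `f` is a kernel of `g` (universal property). -/
def IsKernelOf {C : Type*} [Category C] {X Y Z : C} (g : Y ⟶ Z) (f : X ⟶ Y) : Prop :=
  FactorsThroughZero (f ≫ g) ∧
  ∀ ⦃W : C⦄ (h : W ⟶ Y), FactorsThroughZero (h ≫ g) → ∃! k : W ⟶ X, k ≫ f = h

/-- `g` is a cokernel (of some morphism). -/
def IsCokernelMor {C : Type*} [Category C] {Y Z : C} (g : Y ⟶ Z) : Prop :=
  ∃ (X : C) (f : X ⟶ Y), IsCokernelOf f g

/-- `f` is a kernel (of some morphism). -/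
def IsKernelMor {C : Type*} [Category C] {X Y : C} (f : X ⟶ Y) : Prop :=
  ∃ (Z : C) (g : Y ⟶ Z), IsKernelOf g f

end ConflationDefs


/-!
`Preglid FR` and `Prefrag FR` are both full subcategories of additive functors `C ⥤ Ab` cut out
by asking that every morphism of a class `S` (the canonical maps `1_{α,β}`) acts injectively. Such
a subcategory is reflective in `C ⥤ Ab`: divide a functor by the elements killed by every map into
the subcategory. Hence it is complete and cocomplete, limits are computed pointwise, and it is
closed under subfunctors. Comparing with the pointwise kernel and image shows that a morphism is a
cokernel iff it is pointwise surjective, and a kernel iff it is pointwise injective with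
`S`-saturated image (`M(s) m` in the image forces `m` in the image). Pointwise surjections are
stable under pointwise pullbacks. Colimits are not pointwise in general, but along a saturated
injection `g` the pointwise pushout `(Y × Z) / {(f x, -g x)}` already lies in the subcategory, and
its map out of `Y` is again a saturated injection.
-/

section KernelsCokernels

open ZeroObject

variable {D : Type*} [Category D] [HasZeroMorphisms D] [HasZeroObject D]

theorem factorsThroughZero_iff_eq_zero {X Y : D} (f : X ⟶ Y) :
    FactorsThroughZero f ↔ f = 0 := by
  constructor
  · rintro ⟨N, hN, a, b, rfl⟩
    rw [hN.eq_of_tgt a 0, zero_comp]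
  · rintro rfl
    exact ⟨0, isZero_zero D, 0, 0, zero_comp.symm⟩

theorem isCokernelOf_iff {X Y Z : D} (f : X ⟶ Y) (g : Y ⟶ Z) :
    IsCokernelOf f g ↔
      f ≫ g = 0 ∧ ∀ ⦃W : D⦄ (h : Y ⟶ W), f ≫ h = 0 → ∃! k : Z ⟶ W, g ≫ k = h := by
  simp only [IsCokernelOf, factorsThroughZero_iff_eq_zero]

theorem isKernelOf_iff {X Y Z : D} (g : Y ⟶ Z) (f : X ⟶ Y) :
    IsKernelOf g f ↔
      f ≫ g = 0 ∧ ∀ ⦃W : D⦄ (h : W ⟶ Y), h ≫ g = 0 → ∃! k : W ⟶ X, k ≫ f = h := by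
  simp only [IsKernelOf, factorsThroughZero_iff_eq_zero]

variable {X Y Z I : D}

theorem IsCokernelOf.exists_section {f : X ⟶ Y} {g : Y ⟶ Z} (hg : IsCokernelOf f g)
    {e : Y ⟶ I} {m : I ⟶ Z} (hfe : f ≫ e = 0) (hem : e ≫ m = g) :
    ∃ s : Z ⟶ I, s ≫ m = 𝟙 Z := by
  rw [isCokernelOf_iff] at hg
  obtain ⟨s, hs, -⟩ := hg.2 e hfe
  refine ⟨s, (hg.2 g hg.1).unique ?_ (Category.comp_id g)⟩
  rw [← Category.assoc, hs, hem]

theorem IsKernelOf.exists_retraction {g : Y ⟶ Z} {f : X ⟶ Y} (hf : IsKernelOf g f)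
    {l : X ⟶ I} {k : I ⟶ Y} (hkg : k ≫ g = 0) (hlk : l ≫ k = f) :
    ∃ r : I ⟶ X, r ≫ f = k ∧ l ≫ r = 𝟙 X := by
  rw [isKernelOf_iff] at hf
  obtain ⟨r, hr, -⟩ := hf.2 k hkg
  refine ⟨r, hr, (hf.2 f hf.1).unique ?_ (Category.id_comp f)⟩
  rw [Category.assoc, hr, hlk]

theorem IsCokernelOf.comp_iso {f : X ⟶ Y} {g : Y ⟶ Z} (hg : IsCokernelOf f g) (e : Z ≅ I) :
    IsCokernelOf f (g ≫ e.hom) := by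
  rw [isCokernelOf_iff] at hg ⊢
  refine ⟨by simp [reassoc_of% hg.1], fun W h hh => ?_⟩
  obtain ⟨k, hk, hu⟩ := hg.2 h hh
  refine ⟨e.inv ≫ k, by simpa using hk, fun k' hk' => ?_⟩
  rw [← hu (e.hom ≫ k') (by simpa using hk'), Iso.inv_hom_id_assoc]

theorem IsKernelOf.iso_comp {g : Y ⟶ Z} {f : X ⟶ Y} (hf : IsKernelOf g f) (e : I ≅ X) :
    IsKernelOf g (e.hom ≫ f) := by
  rw [isKernelOf_iff] at hf ⊢
  refine ⟨by simp [hf.1], fun W h hh => ?_⟩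
  obtain ⟨k, hk, hu⟩ := hf.2 h hh
  refine ⟨k ≫ e.inv, by simpa using hk, fun k' hk' => ?_⟩
  simp [← hu (k' ≫ e.hom) (by simpa using hk')]

theorem IsKernelMor.comp_iso {f : X ⟶ Y} (hf : IsKernelMor f) (e : Y ≅ I) :
    IsKernelMor (f ≫ e.hom) := by
  obtain ⟨Z, g, hfg⟩ := hf
  rw [isKernelOf_iff] at hfg
  refine ⟨Z, e.inv ≫ g, (isKernelOf_iff _ _).2 ⟨by simp [hfg.1], fun W h hh => ?_⟩⟩
  obtain ⟨k, hk, hu⟩ := hfg.2 (h ≫ e.inv) (by simpa using hh)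
  exact ⟨k, by simp [reassoc_of% hk], fun k' hk' => hu k' (by simp [← hk'])⟩

end KernelsCokernels

section FunctorConstructions

variable {C : Type u} [Category.{u} C]

structure AddSubfunctor (F : C ⥤ AddCommGrpCat.{u}) where
  obj (X : C) : AddSubgroup (F.obj X)
  map_mem {X Y : C} (f : X ⟶ Y) {m : F.obj X} : m ∈ obj X → F.map f m ∈ obj Y

namespace AddSubfunctor

variable {F G : C ⥤ AddCommGrpCat.{u}} (K : AddSubfunctor F)

def toFunctor : C ⥤ AddCommGrpCat.{u} where
  obj X := AddCommGrpCat.of (K.obj X)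
  map f := AddCommGrpCat.ofHom <|
    ((F.map f).hom.comp (K.obj _).subtype).codRestrict _ fun m => K.map_mem f m.2
  map_id X := by ext m; simp
  map_comp f g := by ext m; simp

def ι : K.toFunctor ⟶ F where
  app X := AddCommGrpCat.ofHom (K.obj X).subtype

lemma ι_app_injective (X : C) : Function.Injective (K.ι.app X) := Subtype.val_injective

def quotient : C ⥤ AddCommGrpCat.{u} where
  obj X := AddCommGrpCat.of (F.obj X ⧸ K.obj X)
  map f := AddCommGrpCat.ofHom (QuotientAddGroup.map _ _ (F.map f).hom fun m => K.map_mem f)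
  map_id X := by ext m; simp
  map_comp f g := by ext m; simp only [Functor.map_comp]; rfl

def π : F ⟶ K.quotient where
  app X := AddCommGrpCat.ofHom (QuotientAddGroup.mk' (K.obj X))

lemma π_app_surjective (X : C) : Function.Surjective (K.π.app X) :=
  QuotientAddGroup.mk_surjective

lemma π_app_eq_zero_iff {X : C} (m : F.obj X) : K.π.app X m = 0 ↔ m ∈ K.obj X :=
  QuotientAddGroup.eq_zero_iff m

lemma π_app_eq_π_app_iff {X : C} (m m' : F.obj X) :
    K.π.app X m = K.π.app X m' ↔ m - m' ∈ K.obj X :=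
  QuotientAddGroup.eq_iff_sub_mem

def desc (φ : F ⟶ G) (hφ : ∀ X, ∀ m ∈ K.obj X, φ.app X m = 0) : K.quotient ⟶ G where
  app X := AddCommGrpCat.ofHom (QuotientAddGroup.lift _ (φ.app X).hom (hφ X))
  naturality X Y f := by
    refine AddCommGrpCat.ext fun m => ?_
    induction m using QuotientAddGroup.induction_on with
    | H m => exact NatTrans.naturality_apply φ f m

def lift (φ : G ⟶ F) (hφ : ∀ X m, φ.app X m ∈ K.obj X) : G ⟶ K.toFunctor where
  app X := AddCommGrpCat.ofHom ((φ.app X).hom.codRestrict _ (hφ X))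
  naturality X Y f := by ext m; exact Subtype.ext (NatTrans.naturality_apply φ f m)

def ker (φ : F ⟶ G) : AddSubfunctor F where
  obj X := (φ.app X).hom.ker
  map_mem f {m} hm := by simp_all [AddMonoidHom.mem_ker]

def range (φ : F ⟶ G) : AddSubfunctor G where
  obj X := (φ.app X).hom.range
  map_mem f := by
    rintro _ ⟨m, rfl⟩
    exact ⟨F.map f m, by simp⟩

end AddSubfunctor

def prodFunctor (F G : C ⥤ AddCommGrpCat.{u}) : C ⥤ AddCommGrpCat.{u} where
  obj X := AddCommGrpCat.of (F.obj X × G.obj X)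
  map f := AddCommGrpCat.ofHom ((F.map f).hom.prodMap (G.map f).hom)

namespace prodFunctor

variable {F G H : C ⥤ AddCommGrpCat.{u}}

def inl : F ⟶ prodFunctor F G where
  app _ := AddCommGrpCat.ofHom (AddMonoidHom.inl _ _)
  naturality _ _ f := AddCommGrpCat.ext fun _ => Prod.ext rfl (G.map f).hom.map_zero.symm

def inr : G ⟶ prodFunctor F G where
  app _ := AddCommGrpCat.ofHom (AddMonoidHom.inr _ _)
  naturality _ _ f := AddCommGrpCat.ext fun _ => Prod.ext (F.map f).hom.map_zero.symm rfl

def lift (φ : H ⟶ F) (ψ : H ⟶ G) : H ⟶ prodFunctor F G where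
  app X := AddCommGrpCat.ofHom ((φ.app X).hom.prod (ψ.app X).hom)
  naturality _ _ f := AddCommGrpCat.ext fun x =>
    Prod.ext (NatTrans.naturality_apply φ f x) (NatTrans.naturality_apply ψ f x)

def desc (φ : F ⟶ H) (ψ : G ⟶ H) : prodFunctor F G ⟶ H where
  app X := AddCommGrpCat.ofHom ((φ.app X).hom.coprod (ψ.app X).hom)
  naturality X Y f := AddCommGrpCat.ext fun p => by
    change φ.app Y (F.map f p.1) + ψ.app Y (G.map f p.2) =
      H.map f (φ.app X p.1 + ψ.app X p.2)
    simp [NatTrans.naturality_apply]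

instance [Preadditive C] [F.Additive] [G.Additive] : (prodFunctor F G).Additive where
  map_add {X Y f g} := AddCommGrpCat.ext fun p => by
    change (F.map (f + g) p.1, G.map (f + g) p.2) =
      (F.map f p.1 + F.map g p.1, G.map f p.2 + G.map g p.2)
    rw [F.map_add, G.map_add]
    rfl

end prodFunctor

end FunctorConstructions

section InjectiveOn

variable {C : Type u} [Category.{u} C]

def InjectiveOn (S : MorphismProperty C) (F : C ⥤ AddCommGrpCat.{u}) : Prop :=
  ∀ ⦃X Y : C⦄ (s : X ⟶ Y), S s → Function.Injective (F.map s)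

def AddSubfunctor.IsSaturated (S : MorphismProperty C) {F : C ⥤ AddCommGrpCat.{u}}
    (K : AddSubfunctor F) : Prop :=
  ∀ ⦃X Y : C⦄ (s : X ⟶ Y), S s → ∀ m, F.map s m ∈ K.obj Y → m ∈ K.obj X

variable {S : MorphismProperty C} {F G : C ⥤ AddCommGrpCat.{u}}

theorem InjectiveOn.of_injective_app (hG : InjectiveOn S G) (φ : F ⟶ G)
    (hφ : ∀ X, Function.Injective (φ.app X)) : InjectiveOn S F := by
  intro X Y s hs a b hab
  apply hφ X
  apply hG s hs
  simp only [← NatTrans.naturality_apply, hab]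

theorem AddSubfunctor.injectiveOn_quotient {K : AddSubfunctor F} (hK : K.IsSaturated S) :
    InjectiveOn S K.quotient := by
  intro X Y s hs
  rw [injective_iff_map_eq_zero]
  intro m
  induction m using QuotientAddGroup.induction_on with
  | H m =>
    intro hm
    exact (QuotientAddGroup.eq_zero_iff m).2 (hK s hs m ((QuotientAddGroup.eq_zero_iff _).1 hm))

theorem InjectiveOn.prodFunctor (hF : InjectiveOn S F) (hG : InjectiveOn S G) :
    InjectiveOn S (prodFunctor F G) := fun _ _ s hs _ _ h =>
  Prod.ext (hF s hs (congr_arg Prod.fst h)) (hG s hs (congr_arg Prod.snd h))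

variable [Preadditive C]

theorem additive_of_injective_app [G.Additive] (φ : F ⟶ G)
    (hφ : ∀ X, Function.Injective (φ.app X)) : F.Additive where
  map_add {X Y f g} := by
    ext m
    apply hφ
    simp [Functor.map_add]

theorem additive_of_surjective_app [F.Additive] (φ : F ⟶ G)
    (hφ : ∀ X, Function.Surjective (φ.app X)) : G.Additive where
  map_add {X Y f g} := by
    ext m
    obtain ⟨m, rfl⟩ := hφ X m
    simp [← NatTrans.naturality_apply, Functor.map_add]

end InjectiveOn

section InjectiveOnSubcategory

variable {C : Type u} [Category.{u} C] [Preadditive C] {S : MorphismProperty C}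
  {P : ObjectProperty (C ⥤+ AddCommGrpCat.{u})} (hP : ∀ M, P M ↔ InjectiveOn S M.obj)

instance : Preadditive P.FullSubcategory := Preadditive.inducedCategory _

variable (P) in
abbrev inclusion : P.FullSubcategory ⥤ C ⥤ AddCommGrpCat.{u} :=
  P.ι ⋙ AdditiveFunctor.forget C AddCommGrpCat.{u}

theorem hom_eq_zero_iff {M N : P.FullSubcategory} (σ : M ⟶ N) :
    σ = 0 ↔ ∀ X m, σ.hom.hom.app X m = 0 := by
  constructor
  · rintro rfl X m
    simp
  · intro h
    ext X m
    simpa using h X m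

theorem congr_app_apply {M N : P.FullSubcategory} {σ τ : M ⟶ N} (h : σ = τ) (X : C)
    (m : M.obj.obj.obj X) : σ.hom.hom.app X m = τ.hom.hom.app X m := by
  rw [h]

theorem isIso_of_bijective_app {M N : P.FullSubcategory} (σ : M ⟶ N)
    (hσ : ∀ X, Function.Bijective (σ.hom.hom.app X)) : IsIso σ := by
  have : ∀ X, IsIso ((inclusion P).map σ |>.app X) := fun X =>
    (ConcreteCategory.isIso_iff_bijective _).2 (hσ X)
  have : IsIso ((inclusion P).map σ) := NatIso.isIso_of_isIso_app _
  exact isIso_of_reflects_iso σ (inclusion P)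

def ofInjectiveOn (F : C ⥤ AddCommGrpCat.{u}) [F.Additive] (hF : InjectiveOn S F) :
    P.FullSubcategory :=
  ⟨⟨F, (inferInstance : F.Additive)⟩, (hP _).2 hF⟩

include hP in
theorem injectiveOn_obj (M : P.FullSubcategory) : InjectiveOn S M.obj.obj :=
  (hP _).1 M.property

variable (P) in
def torsion (F : C ⥤ AddCommGrpCat.{u}) : AddSubfunctor F where
  obj X := ⨅ (N : P.FullSubcategory) (φ : F ⟶ N.obj.obj), (φ.app X).hom.ker
  map_mem f m hm := by
    simp only [AddSubgroup.mem_iInf, AddMonoidHom.mem_ker] at hm ⊢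
    intro N φ
    simp [NatTrans.naturality_apply, hm N φ]

instance (F : C ⥤ AddCommGrpCat.{u}) : (torsion P F).quotient.Additive where
  map_add {X Y f g} := by
    refine AddCommGrpCat.ext fun m => ?_
    obtain ⟨m, rfl⟩ := (torsion P F).π_app_surjective X m
    change (torsion P F).π.app Y (F.map (f + g) m) =
      (torsion P F).π.app Y (F.map f m) + (torsion P F).π.app Y (F.map g m)
    rw [← map_add, AddSubfunctor.π_app_eq_π_app_iff]
    simp only [torsion, AddSubgroup.mem_iInf, AddMonoidHom.mem_ker]
    intro N φ
    simp [NatTrans.naturality_apply, Functor.map_add]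

include hP in
theorem injectiveOn_quotient_torsion (F : C ⥤ AddCommGrpCat.{u}) :
    InjectiveOn S (torsion P F).quotient := by
  refine AddSubfunctor.injectiveOn_quotient fun X Y s hs m hm => ?_
  simp only [torsion, AddSubgroup.mem_iInf, AddMonoidHom.mem_ker] at hm ⊢
  intro N φ
  apply injectiveOn_obj hP N s hs
  simp [← NatTrans.naturality_apply, hm N φ]

def reflection (F : C ⥤ AddCommGrpCat.{u}) : P.FullSubcategory :=
  ofInjectiveOn hP _ (injectiveOn_quotient_torsion hP F)

def reflectionHomEquiv (F : C ⥤ AddCommGrpCat.{u}) (N : P.FullSubcategory) :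
    (reflection hP F ⟶ N) ≃ (F ⟶ (inclusion P).obj N) where
  toFun ψ := (torsion P F).π ≫ ψ.hom.hom
  invFun φ := ObjectProperty.homMk <| ObjectProperty.homMk <|
    (torsion P F).desc φ fun X m hm => by
      simp only [torsion, AddSubgroup.mem_iInf, AddMonoidHom.mem_ker] at hm
      exact hm N φ
  left_inv ψ := by
    ext X m
    obtain ⟨m, rfl⟩ := (torsion P F).π_app_surjective X m
    rfl
  right_inv φ := rfl

@[reducible] def reflective : Reflective (inclusion P) where
  L := Adjunction.leftAdjointOfEquiv (reflectionHomEquiv hP) fun _ _ _ _ _ => rfl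
  adj := Adjunction.adjunctionOfEquivLeft _ _

include hP in
theorem hasLimits_of_iff_injectiveOn : HasLimits P.FullSubcategory :=
  have := reflective hP
  hasLimits_of_reflective (inclusion P)

include hP in
theorem hasColimits_of_iff_injectiveOn : HasColimits P.FullSubcategory :=
  have := reflective hP
  hasColimits_of_reflective (inclusion P)

include hP in
theorem hasZeroObject_of_iff_injectiveOn : HasZeroObject P.FullSubcategory :=
  have := hasLimits_of_iff_injectiveOn hP
  hasZeroObject_of_hasTerminal_object

section SubQuotient

variable {M : P.FullSubcategory} (K : AddSubfunctor M.obj.obj)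

def subObj : P.FullSubcategory :=
  have := additive_of_injective_app K.ι K.ι_app_injective
  ofInjectiveOn hP K.toFunctor ((injectiveOn_obj hP M).of_injective_app K.ι K.ι_app_injective)

def subι : subObj hP K ⟶ M := ObjectProperty.homMk (ObjectProperty.homMk K.ι)

def subLift {N : P.FullSubcategory} (σ : N ⟶ M) (hσ : ∀ X m, σ.hom.hom.app X m ∈ K.obj X) :
    N ⟶ subObj hP K :=
  ObjectProperty.homMk (ObjectProperty.homMk (K.lift σ.hom.hom hσ))

lemma subLift_subι {N : P.FullSubcategory} (σ : N ⟶ M)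
    (hσ : ∀ X m, σ.hom.hom.app X m ∈ K.obj X) : subLift hP K σ hσ ≫ subι hP K = σ := rfl

variable (hK : K.IsSaturated S)

def quotObj : P.FullSubcategory :=
  have := additive_of_surjective_app K.π K.π_app_surjective
  ofInjectiveOn hP K.quotient (K.injectiveOn_quotient hK)

def quotπ : M ⟶ quotObj hP K hK := ObjectProperty.homMk (ObjectProperty.homMk K.π)

theorem isKernelOf_subι_quotπ : IsKernelOf (quotπ hP K hK) (subι hP K) := by
  have := hasZeroObject_of_iff_injectiveOn hP
  refine (isKernelOf_iff _ _).2 ⟨(hom_eq_zero_iff _).2 fun X m => ?_, fun W σ hσ => ?_⟩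
  · exact (K.π_app_eq_zero_iff _).2 m.2
  · have hσK : ∀ X m, σ.hom.hom.app X m ∈ K.obj X := fun X m =>
      (K.π_app_eq_zero_iff _).1 ((hom_eq_zero_iff _).1 hσ X m)
    refine ⟨subLift hP K σ hσK, rfl, fun τ hτ => ?_⟩
    ext X m
    exact Subtype.ext (congr_app_apply hτ X m)

theorem isCokernelOf_subι_quotπ : IsCokernelOf (subι hP K) (quotπ hP K hK) := by
  have := hasZeroObject_of_iff_injectiveOn hP
  refine (isCokernelOf_iff _ _).2 ⟨(hom_eq_zero_iff _).2 fun X m => ?_, fun W σ hσ => ?_⟩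
  · exact (K.π_app_eq_zero_iff _).2 m.2
  · refine ⟨ObjectProperty.homMk (ObjectProperty.homMk (K.desc σ.hom.hom fun X m hm =>
      (hom_eq_zero_iff _).1 hσ X ⟨m, hm⟩)), rfl, fun τ hτ => ?_⟩
    ext X q
    obtain ⟨m, rfl⟩ := K.π_app_surjective X q
    exact congr_app_apply hτ X m

end SubQuotient

section Characterization

variable {L M N : P.FullSubcategory}

include hP in
theorem surjective_app_of_isCokernelMor {g : M ⟶ N} (hg : IsCokernelMor g) (X : C) :
    Function.Surjective (g.hom.hom.app X) := by
  have := hasZeroObject_of_iff_injectiveOn hP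
  obtain ⟨_, f, hfg⟩ := hg
  -- `g` factors through the inclusion of its image, which the cokernel property splits.
  let I := AddSubfunctor.range g.hom.hom
  have hfe : f ≫ subLift hP I g (fun X m => ⟨m, rfl⟩) = 0 := by
    refine (hom_eq_zero_iff _).2 fun X m => Subtype.ext ?_
    exact (hom_eq_zero_iff _).1 ((isCokernelOf_iff f g).1 hfg).1 X m
  obtain ⟨s, hs⟩ := hfg.exists_section hfe (subLift_subι hP I g _)
  intro n
  obtain ⟨m, hm⟩ := (s.hom.hom.app X n).2
  exact ⟨m, hm.trans (congr_app_apply hs X n)⟩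

include hP in
theorem isCokernelMor_of_surjective_app {g : M ⟶ N}
    (hg : ∀ X, Function.Surjective (g.hom.hom.app X)) : IsCokernelMor g := by
  have := hasZeroObject_of_iff_injectiveOn hP
  let K := AddSubfunctor.ker g.hom.hom
  have hK : K.IsSaturated S := fun X Y s hs m hm => by
    apply injectiveOn_obj hP N s hs
    simpa [K, AddSubfunctor.ker, ← NatTrans.naturality_apply] using hm
  let e : quotObj hP K hK ⟶ N :=
    ObjectProperty.homMk (ObjectProperty.homMk (K.desc g.hom.hom fun _ _ hm => hm))
  have he : IsIso e := by
    refine isIso_of_bijective_app e fun X => ⟨?_, fun n => ?_⟩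
    · rw [injective_iff_map_eq_zero]
      intro q
      induction q using QuotientAddGroup.induction_on with
      | H m => exact fun hm => (QuotientAddGroup.eq_zero_iff m).2 hm
    · obtain ⟨m, rfl⟩ := hg X n
      exact ⟨QuotientAddGroup.mk m, rfl⟩
  exact ⟨_, _, (isCokernelOf_subι_quotπ hP K hK).comp_iso (asIso e)⟩

include hP in
theorem isCokernelMor_iff_surjective_app (g : M ⟶ N) :
    IsCokernelMor g ↔ ∀ X, Function.Surjective (g.hom.hom.app X) :=
  ⟨surjective_app_of_isCokernelMor hP, isCokernelMor_of_surjective_app hP⟩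

include hP in
theorem injective_app_of_isKernelMor {f : L ⟶ M} (hf : IsKernelMor f) :
    (∀ X, Function.Injective (f.hom.hom.app X)) ∧
      (AddSubfunctor.range f.hom.hom).IsSaturated S := by
  have := hasZeroObject_of_iff_injectiveOn hP
  obtain ⟨W, w, hfw⟩ := hf
  -- `f` factors through the pointwise kernel of `w`, and the kernel property makes the first
  -- factor a split monomorphism onto that kernel.
  let K := AddSubfunctor.ker w.hom.hom
  have hfw0 := (hom_eq_zero_iff _).1 ((isKernelOf_iff w f).1 hfw).1
  have hKw : subι hP K ≫ w = 0 := (hom_eq_zero_iff _).2 fun X m => m.2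
  let l := subLift hP K f hfw0
  obtain ⟨r, hr, hlr⟩ := hfw.exists_retraction hKw (subLift_subι hP K f hfw0)
  have hK : ∀ X, ∀ m ∈ K.obj X, m ∈ (AddSubfunctor.range f.hom.hom).obj X := fun X m hm =>
    ⟨r.hom.hom.app X ⟨m, hm⟩, congr_app_apply hr X ⟨m, hm⟩⟩
  refine ⟨fun X a b hab => ?_, fun X Y s hs m hm => hK X m ?_⟩
  · have hl : l.hom.hom.app X a = l.hom.hom.app X b := Subtype.ext hab
    calc a = r.hom.hom.app X (l.hom.hom.app X a) := (congr_app_apply hlr X a).symm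
      _ = b := (congr_arg (r.hom.hom.app X) hl).trans (congr_app_apply hlr X b)
  · obtain ⟨a, ha⟩ := hm
    have h1 : w.hom.hom.app Y (M.obj.obj.map s m) = 0 := ha ▸ hfw0 Y a
    show w.hom.hom.app X m = 0
    apply injectiveOn_obj hP W s hs
    simpa [← NatTrans.naturality_apply] using h1

include hP in
theorem isKernelMor_of_injective_app {f : L ⟶ M}
    (hf : ∀ X, Function.Injective (f.hom.hom.app X))
    (hsat : (AddSubfunctor.range f.hom.hom).IsSaturated S) : IsKernelMor f := by
  have := hasZeroObject_of_iff_injectiveOn hP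
  let K := AddSubfunctor.range f.hom.hom
  let e : L ⟶ subObj hP K := subLift hP K f fun X m => ⟨m, rfl⟩
  have he : IsIso e := by
    refine isIso_of_bijective_app e fun X => ⟨fun a b hab => hf X (congr_arg Subtype.val hab), ?_⟩
    rintro ⟨_, a, rfl⟩
    exact ⟨a, rfl⟩
  exact ⟨_, _, (isKernelOf_subι_quotπ hP K hsat).iso_comp (asIso e)⟩

end Characterization

include hP in
theorem surjective_app_fst_of_isPullback {W X Y Z : P.FullSubcategory} {fst : W ⟶ X}
    {snd : W ⟶ Y} {f : X ⟶ Z} {g : Y ⟶ Z} (sq : IsPullback fst snd f g)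
    (hg : ∀ α, Function.Surjective (g.hom.hom.app α)) (α : C) :
    Function.Surjective (fst.hom.hom.app α) := by
  have := reflective hP
  -- The inclusion is a right adjoint, so at each `α` the square is a pullback of sets.
  have sqα := ((sq.map (inclusion P)).map ((evaluation C _).obj α)).map (forget _)
  intro x
  obtain ⟨y, hy⟩ := hg α (f.hom.hom.app α x)
  obtain ⟨w, hw, -⟩ := ((Types.isPullback_iff _ _ _ _).1 sqα).2.2 x y hy.symm
  exact ⟨w, hw⟩

section Pushout

variable {X Y Z : P.FullSubcategory}

def pushoutRel (f : X ⟶ Y) (g : X ⟶ Z) : AddSubfunctor (prodFunctor Y.obj.obj Z.obj.obj) :=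
  AddSubfunctor.range (prodFunctor.lift f.hom.hom (-g.hom.hom))

variable (f : X ⟶ Y) {g : X ⟶ Z}

theorem mem_pushoutRel {α : C} {p : Y.obj.obj.obj α × Z.obj.obj.obj α} :
    p ∈ (pushoutRel f g).obj α ↔ ∃ x, (f.hom.hom.app α x, -g.hom.hom.app α x) = p :=
  Iff.rfl

include hP in
theorem pushoutRel_isSaturated (hg : IsKernelMor g) : (pushoutRel f g).IsSaturated S := by
  obtain ⟨hinj, hsat⟩ := injective_app_of_isKernelMor hP hg
  -- Saturation of the image of `g` pulls the witness `x'` back to some `x`; injectivity of `g`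
  -- and of `Y.map s` then identify `(a, b)` with `(f x, -g x)`.
  rintro α β s hs ⟨a, b⟩ hab
  obtain ⟨x', hx'⟩ := (mem_pushoutRel f).1 hab
  have h1 : f.hom.hom.app β x' = Y.obj.obj.map s a := congr_arg Prod.fst hx'
  have h2 : -g.hom.hom.app β x' = Z.obj.obj.map s b := congr_arg Prod.snd hx'
  obtain ⟨x, hx⟩ : ∃ x, g.hom.hom.app α x = -b :=
    hsat s hs (-b) ⟨x', by rw [map_neg, ← h2, neg_neg]⟩
  have hxx' : X.obj.obj.map s x = x' := by
    apply hinj β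
    rw [NatTrans.naturality_apply, hx, map_neg, ← h2, neg_neg]
  refine (mem_pushoutRel f).2 ⟨x, Prod.ext ?_ (by simp [hx])⟩
  apply injectiveOn_obj hP Y s hs
  simpa [← NatTrans.naturality_apply, hxx'] using h1

def prodObj (Y Z : P.FullSubcategory) : P.FullSubcategory :=
  ofInjectiveOn hP (prodFunctor Y.obj.obj Z.obj.obj)
    ((injectiveOn_obj hP Y).prodFunctor (injectiveOn_obj hP Z))

variable (hg : IsKernelMor g)

def pushoutObj : P.FullSubcategory :=
  quotObj hP (M := prodObj hP Y Z) (pushoutRel f g) (pushoutRel_isSaturated hP f hg)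

def pushoutInl : Y ⟶ pushoutObj hP f hg :=
  ObjectProperty.homMk (ObjectProperty.homMk prodFunctor.inl) ≫ quotπ hP _ _

def pushoutInr : Z ⟶ pushoutObj hP f hg :=
  ObjectProperty.homMk (ObjectProperty.homMk prodFunctor.inr) ≫ quotπ hP _ _

lemma pushoutInl_app_apply {α : C} (y : Y.obj.obj.obj α) :
    (pushoutInl hP f hg).hom.hom.app α y = (pushoutRel f g).π.app α (y, 0) := rfl

lemma pushoutInr_app_apply {α : C} (z : Z.obj.obj.obj α) :
    (pushoutInr hP f hg).hom.hom.app α z = (pushoutRel f g).π.app α (0, z) := rfl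

theorem pushout_condition : f ≫ pushoutInl hP f hg = g ≫ pushoutInr hP f hg := by
  ext α x
  refine ((pushoutRel f g).π_app_eq_π_app_iff _ _).2 ((mem_pushoutRel f).2 ⟨x, ?_⟩)
  exact Prod.ext (sub_zero _).symm (zero_sub _).symm

def pushoutDesc (s : PushoutCocone f g) : pushoutObj hP f hg ⟶ s.pt :=
  ObjectProperty.homMk <| ObjectProperty.homMk <| (pushoutRel f g).desc
    (prodFunctor.desc s.inl.hom.hom s.inr.hom.hom) fun α p hp => by
      obtain ⟨x, rfl⟩ := (mem_pushoutRel f).1 hp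
      change s.inl.hom.hom.app α _ + s.inr.hom.hom.app α (-_) = 0
      rw [map_neg, ← sub_eq_add_neg, sub_eq_zero]
      exact congr_app_apply s.condition α x

theorem pushout_hom_ext {W : P.FullSubcategory} {σ τ : pushoutObj hP f hg ⟶ W}
    (hl : pushoutInl hP f hg ≫ σ = pushoutInl hP f hg ≫ τ)
    (hr : pushoutInr hP f hg ≫ σ = pushoutInr hP f hg ≫ τ) : σ = τ := by
  ext α q
  obtain ⟨⟨a, b⟩, rfl⟩ := (pushoutRel f g).π_app_surjective α q
  have hab : (pushoutRel f g).π.app α (a, b) =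
      (pushoutInl hP f hg).hom.hom.app α a + (pushoutInr hP f hg).hom.hom.app α b := by
    rw [pushoutInl_app_apply, pushoutInr_app_apply]
    exact (congrArg _ (Prod.ext (add_zero a).symm (zero_add b).symm)).trans (map_add _ _ _)
  rw [hab, map_add, map_add]
  exact congrArg₂ (· + ·) (congr_app_apply hl α a) (congr_app_apply hr α b)

theorem isPushout_pushoutInl_pushoutInr :
    IsPushout f g (pushoutInl hP f hg) (pushoutInr hP f hg) := by
  have inl_desc (s : PushoutCocone f g) :
      pushoutInl hP f hg ≫ pushoutDesc hP f hg s = s.inl := by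
    ext α y
    change s.inl.hom.hom.app α y + s.inr.hom.hom.app α 0 = _
    simp
  have inr_desc (s : PushoutCocone f g) :
      pushoutInr hP f hg ≫ pushoutDesc hP f hg s = s.inr := by
    ext α z
    change s.inl.hom.hom.app α 0 + s.inr.hom.hom.app α z = _
    simp
  exact IsPushout.of_isColimit' ⟨pushout_condition hP f hg⟩ <|
    PushoutCocone.IsColimit.mk _ (pushoutDesc hP f hg) inl_desc inr_desc fun s m h1 h2 =>
      pushout_hom_ext hP f hg ((inl_desc s).symm ▸ h1) ((inr_desc s).symm ▸ h2)

theorem pushoutInl_injective_app (α : C) :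
    Function.Injective ((pushoutInl hP f hg).hom.hom.app α) := by
  obtain ⟨hinj, -⟩ := injective_app_of_isKernelMor hP hg
  rw [injective_iff_map_eq_zero]
  intro y hy
  obtain ⟨x, hx⟩ := (mem_pushoutRel f).1 (((pushoutRel f g).π_app_eq_zero_iff _).1 hy)
  have h1 : f.hom.hom.app α x = y := congr_arg Prod.fst hx
  have h2 : -g.hom.hom.app α x = 0 := congr_arg Prod.snd hx
  have hx0 : x = 0 := hinj α (by rw [map_zero]; exact neg_eq_zero.1 h2)
  rw [← h1, hx0, map_zero]

theorem pushoutInl_range_isSaturated :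
    (AddSubfunctor.range (pushoutInl hP f hg).hom.hom).IsSaturated S := by
  obtain ⟨-, hsat⟩ := injective_app_of_isKernelMor hP hg
  rintro α β s hs q ⟨y', hy'⟩
  obtain ⟨⟨a, b⟩, rfl⟩ := (pushoutRel f g).π_app_surjective α q
  change (pushoutRel f g).π.app β (y', 0) =
    (pushoutRel f g).π.app β ((prodFunctor _ _).map s (a, b)) at hy'
  obtain ⟨x', hx'⟩ := (mem_pushoutRel f).1 (((pushoutRel f g).π_app_eq_π_app_iff _ _).1 hy')
  have h2 : -g.hom.hom.app β x' = 0 - Z.obj.obj.map s b := congr_arg Prod.snd hx'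
  obtain ⟨x, hx⟩ : ∃ x, g.hom.hom.app α x = -b :=
    hsat s hs (-b) ⟨-x', by rw [map_neg, map_neg, h2, zero_sub]⟩
  refine ⟨a - f.hom.hom.app α x,
    ((pushoutRel f g).π_app_eq_π_app_iff _ _).2 ((mem_pushoutRel f).2 ⟨-x, ?_⟩)⟩
  change (f.hom.hom.app α (-x), -g.hom.hom.app α (-x)) = (a - f.hom.hom.app α x, 0) - (a, b)
  rw [map_neg, map_neg, neg_neg, hx]
  exact Prod.ext (show -f.hom.hom.app α x = a - f.hom.hom.app α x - a by abel)
    (show -b = 0 - b by rw [zero_sub])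

end Pushout

include hP in
theorem isKernelMor_inl_of_isPushout {X Y Z Q : P.FullSubcategory} {f : X ⟶ Y} {g : X ⟶ Z}
    {inl : Y ⟶ Q} {inr : Z ⟶ Q} (sq : IsPushout f g inl inr) (hg : IsKernelMor g) :
    IsKernelMor inl := by
  have := hasZeroObject_of_iff_injectiveOn hP
  rw [← IsPushout.inl_isoIsPushout_hom _ _ (isPushout_pushoutInl_pushoutInr hP f hg) sq]
  exact (isKernelMor_of_injective_app hP (pushoutInl_injective_app hP f hg)
    (pushoutInl_range_isSaturated hP f hg)).comp_iso _

include hP in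
theorem isCokernelMor_fst_of_isPullback {W X Y Z : P.FullSubcategory} {fst : W ⟶ X}
    {snd : W ⟶ Y} {f : X ⟶ Z} {g : Y ⟶ Z} (sq : IsPullback fst snd f g)
    (hg : IsCokernelMor g) : IsCokernelMor fst := by
  rw [isCokernelMor_iff_surjective_app hP] at hg ⊢
  exact surjective_app_fst_of_isPullback hP sq hg

include hP in
theorem quasiAbelian_of_iff_injectiveOn :
    HasLimits P.FullSubcategory ∧ HasColimits P.FullSubcategory ∧
     (∀ {W X Y Z : P.FullSubcategory} (fst : W ⟶ X) (snd : W ⟶ Y) (f : X ⟶ Z) (g : Y ⟶ Z),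
        IsPullback fst snd f g → IsCokernelMor g → IsCokernelMor fst) ∧
     (∀ {X Y Z Q : P.FullSubcategory} (f : X ⟶ Y) (g : X ⟶ Z) (inl : Y ⟶ Q) (inr : Z ⟶ Q),
        IsPushout f g inl inr → IsKernelMor g → IsKernelMor inl) :=
  ⟨hasLimits_of_iff_injectiveOn hP, hasColimits_of_iff_injectiveOn hP,
    fun _ _ _ _ sq => isCokernelMor_fst_of_isPullback hP sq,
    fun _ _ _ _ sq => isKernelMor_inl_of_isPushout hP sq⟩

end InjectiveOnSubcategory

section Gliders

variable {Γ : Type u} [Group Γ] [PartialOrder Γ]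
  [CovariantClass Γ Γ (· * ·) (· ≤ ·)] [CovariantClass Γ Γ (Function.swap (· * ·)) (· ≤ ·)]
  {R : Type u} [Ring R] (FR : RingFiltration Γ R) (Λ : Set Γ)

def unitHoms : MorphismProperty (OFF FR Λ) := fun X Y u => ∃ h, u = unitHom FR Λ X Y h

def unitHomsFF : MorphismProperty (FF FR Λ) := fun X Y u =>
  ∃ h, u = unitHom FR Λ (FF.toOFF FR Λ X) (FF.toOFF FR Λ Y) h

theorem isPreglider_iff_injectiveOn (M : Mod (OFF FR Λ)) :
    IsPreglider FR Λ M ↔ InjectiveOn (unitHoms FR Λ) M.obj := by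
  constructor
  · rintro hM X Y _ ⟨h, rfl⟩
    exact hM X Y h
  · exact fun hM X Y h => hM _ ⟨h, rfl⟩

theorem isPrefragment_iff_injectiveOn (M : Mod (FF FR Λ)) :
    IsPrefragment FR Λ M ↔ InjectiveOn (unitHomsFF FR Λ) M.obj := by
  constructor
  · rintro hM ⟨α⟩ ⟨β⟩ _ ⟨h, rfl⟩
    exact hM α β h
  · exact fun hM α β h => hM (X := .of α) (Y := .of β) _ ⟨h, rfl⟩

end Gliders

section Statements

variable {Γ : Type u} [Group Γ] [PartialOrder Γ]
  [CovariantClass Γ Γ (· * ·) (· ≤ ·)] [CovariantClass Γ Γ (Function.swap (· * ·)) (· ≤ ·)]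
  {R : Type u} [Ring R]

/-- The categories `Preglid FR` and `Prefrag FR` are complete and
cocomplete quasi-abelian categories: each is additive (they carry `Preadditive`
instances, constructed above, and have all limits and colimits, in particular kernels,
cokernels and biproducts), cokernels are stable under pullback and kernels are stable
under pushout. -/
theorem statement_9 (FR : RingFiltration Γ R) (Λ : Set Γ) :
    -- `Preglid FR` is a complete and cocomplete quasi-abelian category
    (HasLimits (Preglid FR Λ) ∧ HasColimits (Preglid FR Λ) ∧
     (∀ {P X Y Z : Preglid FR Λ} (fst : P ⟶ X) (snd : P ⟶ Y) (f : X ⟶ Z) (g : Y ⟶ Z),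
        IsPullback fst snd f g → IsCokernelMor g → IsCokernelMor fst) ∧
     (∀ {X Y Z P : Preglid FR Λ} (f : X ⟶ Y) (g : X ⟶ Z) (inl : Y ⟶ P) (inr : Z ⟶ P),
        IsPushout f g inl inr → IsKernelMor g → IsKernelMor inl)) ∧
    -- `Prefrag FR` is a complete and cocomplete quasi-abelian category
    (HasLimits (Prefrag FR Λ) ∧ HasColimits (Prefrag FR Λ) ∧
     (∀ {P X Y Z : Prefrag FR Λ} (fst : P ⟶ X) (snd : P ⟶ Y) (f : X ⟶ Z) (g : Y ⟶ Z),
        IsPullback fst snd f g → IsCokernelMor g → IsCokernelMor fst) ∧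
     (∀ {X Y Z P : Prefrag FR Λ} (f : X ⟶ Y) (g : X ⟶ Z) (inl : Y ⟶ P) (inr : Z ⟶ P),
        IsPushout f g inl inr → IsKernelMor g → IsKernelMor inl)) :=
  ⟨quasiAbelian_of_iff_injectiveOn (isPreglider_iff_injectiveOn FR Λ),
    quasiAbelian_of_iff_injectiveOn (isPrefragment_iff_injectiveOn FR Λ)⟩

end Statements

end GliderPaper
end
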